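/- Every x ∈ A_a can be recovered from its samples {L_j x(rn)}_{j=1..s, n=0..ℓ−1} (equivalently, the vectors {g_{j,n}} form a frame/spanning set for ℂ^N) if and only if rank R_{a,b} = N, where R_{a,b} is the sℓ×N matrix whose conjugate-transpose has columns g_{j,n}. In particular, this forces s ≥ r. -/

import Mathlib

/-!
Expanding `x ∈ A_a` in the basis `Tᵏ a` as `x = ∑ αₖ Tᵏ a`, the adjoint relation
`⟪S^m y, x⟫ = ⟪y, T^m x⟫` and the `N`-periodicity of `k ↦ Tᵏ a` show that the samples of `x`
are the entries of `R_{a,b} α`. So sampling is injective on `A_a` iff `R_{a,b}` has trivial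
kernel, i.e. rank `N`; and a vector orthogonal to every `g_{j,n}` is precisely a vector in that
kernel, which gives the frame criterion. Finally `N = rℓ ≤ rank ≤ sℓ`.
-/

open scoped InnerProductSpace ComplexInnerProductSpace ComplexConjugate

namespace ContinuousLinearEquiv

variable {R M : Type*} [Semiring R] [TopologicalSpace M] [AddCommMonoid M] [Module R M]

lemma mul_apply (f g : M ≃L[R] M) (x : M) : (f * g) x = f (g x) := rfl

lemma inv_apply (f : M ≃L[R] M) (x : M) : f⁻¹ x = f.symm x := rfl

lemma zpow_add_natCast_apply_of_pow_apply {T : M ≃L[R] M} {N : ℕ} {a : M} (h : (T ^ N) a = a)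
    (m : ℤ) : (T ^ (m + N)) a = (T ^ m) a := by
  rw [zpow_add, mul_apply, zpow_natCast, h]

end ContinuousLinearEquiv

section InnerProductSpace

variable {𝕜 E : Type*} [RCLike 𝕜] [NormedAddCommGroup E] [InnerProductSpace 𝕜 E]
  {T S : E ≃L[𝕜] E}

open ContinuousLinearEquiv

lemma inner_pow_apply_left (h : ∀ x y, ⟪T x, y⟫_𝕜 = ⟪x, S y⟫_𝕜) (n : ℕ) (x y : E) :
    ⟪(T ^ n) x, y⟫_𝕜 = ⟪x, (S ^ n) y⟫_𝕜 := by
  induction n generalizing x with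
  | zero => rfl
  | succ n ih => rw [pow_succ, mul_apply, ih, h, pow_succ', mul_apply]

lemma inner_inv_apply_left (h : ∀ x y, ⟪T x, y⟫_𝕜 = ⟪x, S y⟫_𝕜) (x y : E) :
    ⟪T⁻¹ x, y⟫_𝕜 = ⟪x, S⁻¹ y⟫_𝕜 := by
  simpa only [inv_apply, apply_symm_apply] using (h (T.symm x) (S.symm y)).symm

lemma inner_zpow_apply_left (h : ∀ x y, ⟪T x, y⟫_𝕜 = ⟪x, S y⟫_𝕜) (m : ℤ) (x y : E) :
    ⟪(T ^ m) x, y⟫_𝕜 = ⟪x, (S ^ m) y⟫_𝕜 := by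
  cases m with
  | ofNat n => exact inner_pow_apply_left h n x y
  | negSucc n =>
    rw [zpow_negSucc, zpow_negSucc]
    exact inner_inv_apply_left (inner_pow_apply_left h (n + 1)) x y

lemma inner_zpow_apply_right (h : ∀ x y, ⟪T x, y⟫_𝕜 = ⟪x, S y⟫_𝕜) (m : ℤ) (x y : E) :
    ⟪(S ^ m) x, y⟫_𝕜 = ⟪x, (T ^ m) y⟫_𝕜 := by
  rw [← inner_conj_symm, ← inner_zpow_apply_left h, inner_conj_symm]

lemma Submodule.mem_orthogonal_span_range_iff {ι : Type*} (g : ι → E) (v : E) :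
    v ∈ (Submodule.span 𝕜 (Set.range g))ᗮ ↔ ∀ i, ⟪g i, v⟫_𝕜 = 0 := by
  refine ⟨fun hv i => inner_right_of_mem_orthogonal (subset_span (Set.mem_range_self i)) hv,
    fun h => (mem_orthogonal' _ _).2 fun u hu => ?_⟩
  have hle : span 𝕜 (Set.range g) ≤ LinearMap.ker (innerₛₗ 𝕜 v) :=
    span_le.2 (Set.range_subset_iff.2 fun i => inner_eq_zero_symm.1 (h i))
  exact hle hu

end InnerProductSpace

namespace Matrix

variable {m n K : Type*} [Fintype n]

lemma rank_eq_card_width_iff [Field K] (A : Matrix m n K) :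
    A.rank = Fintype.card n ↔ ∀ v, A *ᵥ v = 0 → v = 0 := by
  have hrk := LinearMap.finrank_range_add_finrank_ker A.mulVecLin
  rw [Module.finrank_fintype_fun_eq_card] at hrk
  have hker : LinearMap.ker A.mulVecLin = ⊥ ↔ ∀ v, A *ᵥ v = 0 → v = 0 := LinearMap.ker_eq_bot'
  rw [rank, ← hker, ← Submodule.finrank_eq_zero]
  omega

variable {𝕜 : Type*} [RCLike 𝕜]

lemma inner_conj_row_eq_mulVec (A : Matrix m n 𝕜) (p : m) (v : EuclideanSpace 𝕜 n) :
    ⟪WithLp.toLp 2 (fun k => conj (A p k)), v⟫_𝕜 = (A *ᵥ v) p := by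
  simp [PiLp.inner_apply, mulVec, dotProduct, mul_comm]

lemma span_conj_rows_eq_top_iff [Fintype m] (A : Matrix m n 𝕜) :
    Submodule.span 𝕜 (Set.range fun p => WithLp.toLp 2 (fun k => conj (A p k))) = ⊤ ↔
      A.rank = Fintype.card n := by
  rw [rank_eq_card_width_iff, ← Submodule.orthogonal_eq_bot_iff, Submodule.eq_bot_iff]
  simp_rw [Submodule.mem_orthogonal_span_range_iff, inner_conj_row_eq_mulVec]
  exact ⟨fun h v hv => congrArg WithLp.ofLp (h (WithLp.toLp 2 v) fun p => congrFun hv p),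
    fun h v hv => by simpa using h v (funext hv)⟩

end Matrix

section Sampling

open Matrix

variable {ι n 𝕜 E : Type*} [Fintype n] [RCLike 𝕜] [NormedAddCommGroup E] [InnerProductSpace 𝕜 E]

lemma inner_samples_determine_span_iff_rank_eq_card (w : ι → E) {v : n → E}
    (hv : LinearIndependent 𝕜 v) :
    (∀ x ∈ Submodule.span 𝕜 (Set.range v), ∀ y ∈ Submodule.span 𝕜 (Set.range v),
        (∀ p, ⟪w p, x⟫_𝕜 = ⟪w p, y⟫_𝕜) → x = y) ↔
      (Matrix.of fun p k => ⟪w p, v k⟫_𝕜).rank = Fintype.card n := by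
  set G := of fun p k => ⟪w p, v k⟫_𝕜
  have hsample : ∀ (α : n → 𝕜) p, ⟪w p, ∑ k, α k • v k⟫_𝕜 = (G *ᵥ α) p := by
    intro α p
    simp [G, inner_sum, inner_smul_right, mulVec, dotProduct, mul_comm]
  simp only [rank_eq_card_width_iff, Submodule.mem_span_range_iff_exists_fun]
  constructor
  · intro h α hα
    have hzero : ∑ k, α k • v k = 0 :=
      h _ ⟨α, rfl⟩ 0 ⟨0, by simp⟩ fun p => by rw [hsample, hα]; simp
    exact funext (Fintype.linearIndependent_iff.1 hv α hzero)
  · rintro h _ ⟨α, rfl⟩ _ ⟨β, rfl⟩ hαβ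
    have hker : G *ᵥ (α - β) = 0 := by
      funext p
      rw [mulVec_sub, Pi.sub_apply, ← hsample, ← hsample, hαβ p, sub_self, Pi.zero_apply]
    rw [sub_eq_zero.1 (h _ hker)]

end Sampling

open ContinuousLinearEquiv in
theorem stmt_11_general {H : Type*} [NormedAddCommGroup H] [InnerProductSpace ℂ H]
    (T S : H ≃L[ℂ] H)
    (hS : ∀ x y : H, ⟪T x, y⟫ = ⟪x, S y⟫)
    (N r ℓ s : ℕ) (hN : 0 < N) (hrl : N = r * ℓ)
    (a : H) (b : Fin s → H)
    (hTN : (T ^ N) a = a)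
    (hind : LinearIndependent ℂ fun k : Fin N => (T ^ (k : ℕ)) a) :
    let rab : Fin s → ℤ → ℂ := fun j k => ⟪b j, (T ^ k) a⟫
    let R : Matrix (Fin s × Fin ℓ) (Fin N) ℂ :=
      Matrix.of fun p k => rab p.1 ((N : ℤ) + (k : ℤ) - (r : ℤ) * (p.2 : ℤ))
    let gvec : Fin s × Fin ℓ → EuclideanSpace ℂ (Fin N) :=
      fun p => WithLp.toLp 2 (fun k => conj (R p k))
    let Aa := Submodule.span ℂ (Set.range fun k : Fin N => (T ^ (k : ℕ)) a)
    let L : H → Fin s × Fin ℓ → ℂ :=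
      fun x p => ⟪(S ^ (-((r : ℤ) * (p.2 : ℤ)))) (b p.1), x⟫
    ((∀ x ∈ Aa, ∀ y ∈ Aa, (∀ p, L x p = L y p) → x = y) ↔ R.rank = N) ∧
    ((Submodule.span ℂ (Set.range gvec) = ⊤) ↔ R.rank = N) ∧
    (R.rank = N → r ≤ s) := by
  intro rab R gvec Aa L
  have hR : R = Matrix.of fun (p : Fin s × Fin ℓ) (k : Fin N) =>
      ⟪(S ^ (-((r : ℤ) * (p.2 : ℤ)))) (b p.1), (T ^ (k : ℕ)) a⟫ := by
    ext p k
    rw [Matrix.of_apply, inner_zpow_apply_right hS, ← mul_apply, ← zpow_natCast, ← zpow_add]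
    change ⟪b p.1, (T ^ ((N : ℤ) + k - r * p.2)) a⟫ = _
    rw [show (N : ℤ) + k - r * p.2 = (-(r * p.2) + k) + N by ring,
      zpow_add_natCast_apply_of_pow_apply hTN]
  refine ⟨?_, by simpa only [Fintype.card_fin] using R.span_conj_rows_eq_top_iff,
    fun hrank => ?_⟩
  · rw [hR]
    simpa only [Fintype.card_fin] using inner_samples_determine_span_iff_rank_eq_card _ hind
  · have hℓ : 0 < ℓ := Nat.pos_of_mul_pos_left (hrl ▸ hN)
    have hle := R.rank_le_card_height
    rw [hrank, Fintype.card_prod, Fintype.card_fin, Fintype.card_fin, hrl] at hle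
    exact Nat.le_of_mul_le_mul_right hle hℓ

/-- In the cyclic case (`T^N a = a`, `{Tᵏa}_{k<N}` linearly
independent, `N = rℓ`), every `x ∈ 𝒜_a` can be recovered from its samples
`{𝓛_j x(rn)}_{j=1..s, n=0..ℓ−1}` — equivalently, the vectors `{g_{j,n}}` form a
spanning set (frame) of `ℂ^N` — iff `rank ℝ_{a,b} = N`, where `ℝ_{a,b}` is the
`sℓ×N` matrix whose conjugate-transpose has columns `g_{j,n}`.  In particular this
forces `s ≥ r`.  (`r_{a,b_j}(k) = ⟨Tᵏ a, b_j⟩` is the paper's inner product, i.e.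
Mathlib's `⟪b_j, Tᵏ a⟫_ℂ`; `S` denotes the adjoint `T*`.) -/
theorem stmt_11 {H : Type*} [NormedAddCommGroup H] [InnerProductSpace ℂ H] [CompleteSpace H]
    (T S : H ≃L[ℂ] H)
    (hS : ∀ x y : H, ⟪T x, y⟫ = ⟪x, S y⟫)
    (N r ℓ s : ℕ) (hN : 0 < N) (hr : 0 < r) (hs : 0 < s) (hrl : N = r * ℓ)
    (a : H) (b : Fin s → H)
    (hTN : (T ^ N) a = a)
    (hind : LinearIndependent ℂ fun k : Fin N => (T ^ (k : ℕ)) a) :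
    let rab : Fin s → ℤ → ℂ := fun j k => ⟪b j, (T ^ k) a⟫
    let R : Matrix (Fin s × Fin ℓ) (Fin N) ℂ :=
      Matrix.of fun p k => rab p.1 ((N : ℤ) + (k : ℤ) - (r : ℤ) * (p.2 : ℤ))
    let gvec : Fin s × Fin ℓ → EuclideanSpace ℂ (Fin N) :=
      fun p => WithLp.toLp 2 (fun k => conj (R p k))
    let Aa := Submodule.span ℂ (Set.range fun k : Fin N => (T ^ (k : ℕ)) a)
    let L : H → Fin s × Fin ℓ → ℂ :=
      fun x p => ⟪(S ^ (-((r : ℤ) * (p.2 : ℤ)))) (b p.1), x⟫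
    ((∀ x ∈ Aa, ∀ y ∈ Aa, (∀ p, L x p = L y p) → x = y) ↔ R.rank = N) ∧
    ((Submodule.span ℂ (Set.range gvec) = ⊤) ↔ R.rank = N) ∧
    (R.rank = N → r ≤ s) :=
  stmt_11_general T S hS N r ℓ s hN hrl a b hTN hind
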